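/- Fix s ∈ (0,1] and a sequence ρ : ℤ → ℂ with Σ_k|ρ_k|² < ∞. Define, for u : ℤ → ℂ with u_0 = 0, K̃(u)_k = −Σ_{k₁+k₂=k, k₁,k₂≠0} ρ_{k₁}u_{k₂}/(3k₁k₂) for k ≠ 0 and K̃(u)_0 = 0. Then for every u with u_0 = 0 and ‖u‖_{H^{−s}} < ∞: ‖K̃(u)‖_{H^{−s}} ≤ 2‖ρ‖_{ℓ²}‖u‖_{H^{−s}}. Consequently, if ‖ρ‖_{ℓ²} < 1/2 then ‖u + K̃(u)‖_{H^{−s}} ≥ (1 − 2‖ρ‖_{ℓ²})‖u‖_{H^{−s}} for all such u. -/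

import Mathlib

/-!
Since `|k|^(-s) ≤ 1` and, for `s ≤ 1`, `1/|k₂| ≤ |k₂|^(-s)`, Cauchy–Schwarz in `k₂` gives
`|K̃(u)_k|² |k|^(-2s) ≤ (1/9) (∑_{m ≠ 0} m⁻²) ∑_{k₂} |ρ_{k-k₂}|² |u_{k₂}|² |k₂|^(-2s)`,
and `∑_{m ≠ 0} m⁻² = π²/3 ≤ 4`. Summing the convolution on the right over `k` gives
`‖K̃(u)‖_{H^{-s}} ≤ (2/3) ‖ρ‖_{ℓ²} ‖u‖_{H^{-s}}`. The lower bound for `u + K̃(u)` is then the reverse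
triangle inequality for the `H^{-s}` norm.
-/

noncomputable section

def l2norm (v : ℤ → ℂ) : ℝ := Real.sqrt (∑' k : ℤ, ‖v k‖ ^ 2)

def hnegNorm (s : ℝ) (u : ℤ → ℂ) : ℝ :=
  Real.sqrt (∑' k : ℤ, ‖u k‖ ^ 2 * |(k : ℝ)| ^ (-2 * s))

/-- `K̃(u)_k = -Σ_{k₁+k₂=k, k₁,k₂≠0} ρ_{k₁} u_{k₂}/(3k₁k₂)`. -/
def Ktilde (ρ : ℤ → ℂ) (u : ℤ → ℂ) (k : ℤ) : ℂ :=
  if k = 0 then 0 else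
    -∑' p : ℤ × ℤ,
      if p.1 + p.2 = k ∧ p.1 ≠ 0 ∧ p.2 ≠ 0 then
        ρ p.1 * u p.2 / (3 * (p.1 : ℂ) * (p.2 : ℂ))
      else 0

open Real

theorem Real.summable_and_tsum_mul_le_sqrt_mul_sqrt {ι : Type*} {f g : ι → ℝ}
    (hf : ∀ i, 0 ≤ f i) (hg : ∀ i, 0 ≤ g i)
    (hf_sum : Summable fun i => f i ^ 2) (hg_sum : Summable fun i => g i ^ 2) :
    Summable (fun i => f i * g i) ∧ ∑' i, f i * g i ≤ √(∑' i, f i ^ 2) * √(∑' i, g i ^ 2) := by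
  simpa [sqrt_eq_rpow, rpow_two] using
    summable_and_inner_le_Lp_mul_Lq_tsum_of_nonneg .two_two hf hg
      (by simpa [rpow_two] using hf_sum) (by simpa [rpow_two] using hg_sum)

theorem Real.summable_and_sqrt_tsum_add_sq_le {ι : Type*} {f g : ι → ℝ}
    (hf : ∀ i, 0 ≤ f i) (hg : ∀ i, 0 ≤ g i)
    (hf_sum : Summable fun i => f i ^ 2) (hg_sum : Summable fun i => g i ^ 2) :
    Summable (fun i => (f i + g i) ^ 2) ∧
      √(∑' i, (f i + g i) ^ 2) ≤ √(∑' i, f i ^ 2) + √(∑' i, g i ^ 2) := by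
  simpa [sqrt_eq_rpow, rpow_two] using
    Lp_add_le_tsum_of_nonneg one_le_two hf hg
      (by simpa [rpow_two] using hf_sum) (by simpa [rpow_two] using hg_sum)

theorem hasSum_inv_sq_int : HasSum (fun m : ℤ => ((m : ℝ) ^ 2)⁻¹) (π ^ 2 / 3) := by
  have h : HasSum (fun n : ℕ => ((n : ℝ) ^ 2)⁻¹) (π ^ 2 / 6) := by
    simpa [one_div] using hasSum_zeta_two
  have hval : π ^ 2 / 3 = π ^ 2 / 6 + π ^ 2 / 6 - (((0 : ℤ) : ℝ) ^ 2)⁻¹ := by norm_num; ring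
  rw [hval]
  exact HasSum.of_nat_of_neg (f := fun m : ℤ => ((m : ℝ) ^ 2)⁻¹) (by simpa using h)
    (by simpa using h)

theorem summable_and_hasSum_tsum_sub_mul {G : Type*} [AddGroup G] {f g : G → ℝ}
    (hf0 : ∀ i, 0 ≤ f i) (hg0 : ∀ i, 0 ≤ g i) (hf : Summable f) (hg : Summable g) :
    (∀ k, Summable fun j => f (k - j) * g j) ∧
      HasSum (fun k => ∑' j, f (k - j) * g j) ((∑' i, f i) * ∑' i, g i) := by
  have hprod : HasSum (fun p : G × G => f p.1 * g p.2) ((∑' i, f i) * ∑' i, g i) :=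
    hf.hasSum.mul hg.hasSum (hf.mul_of_nonneg hg (fun i => hf0 i) (fun i => hg0 i))
  let shear : G × G ≃ G × G :=
    { toFun := fun p => (p.1 - p.2, p.2)
      invFun := fun p => (p.1 + p.2, p.2)
      left_inv := fun p => by simp
      right_inv := fun p => by simp }
  have hfiber (k : G) : Summable fun j => f (k - j) * g j :=
    hprod.summable.comp_injective (i := fun j => (k - j, j)) fun a b h => congrArg Prod.snd h
  exact ⟨hfiber, (shear.hasSum_iff.mpr hprod).prod_fiberwise fun k => (hfiber k).hasSum⟩

section Weights

variable {s : ℝ}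

theorem abs_intCast_rpow_neg_le_one (hs : 0 ≤ s) (k : ℤ) : |(k : ℝ)| ^ (-s) ≤ 1 := by
  rcases eq_or_ne k 0 with rfl | hk
  · simpa using zero_rpow_le_one (-s)
  · exact rpow_le_one_of_one_le_of_nonpos (by exact_mod_cast Int.one_le_abs hk) (by linarith)

theorem abs_intCast_inv_le_rpow_neg (hs : s ≤ 1) (j : ℤ) : |(j : ℝ)|⁻¹ ≤ |(j : ℝ)| ^ (-s) := by
  rcases eq_or_ne j 0 with rfl | hj
  · simpa using rpow_nonneg le_rfl (-s)
  · rw [← rpow_neg_one]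
    exact rpow_le_rpow_of_exponent_le (by exact_mod_cast Int.one_le_abs hj) (by linarith)

theorem norm_sq_mul_abs_rpow (z : ℂ) (x : ℝ) :
    ‖z‖ ^ 2 * |x| ^ (-2 * s) = (‖z‖ * |x| ^ (-s)) ^ 2 := by
  rw [mul_pow, show -2 * s = -s * 2 by ring, rpow_mul (abs_nonneg x), rpow_two]

theorem hnegNorm_eq (s : ℝ) (u : ℤ → ℂ) :
    hnegNorm s u = √(∑' k : ℤ, (‖u k‖ * |(k : ℝ)| ^ (-s)) ^ 2) := by
  simp_rw [hnegNorm, norm_sq_mul_abs_rpow]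

theorem summable_and_hnegNorm_add_le {f g : ℤ → ℂ}
    (hf : Summable fun k : ℤ => ‖f k‖ ^ 2 * |(k : ℝ)| ^ (-2 * s))
    (hg : Summable fun k : ℤ => ‖g k‖ ^ 2 * |(k : ℝ)| ^ (-2 * s)) :
    (Summable fun k : ℤ => ‖f k + g k‖ ^ 2 * |(k : ℝ)| ^ (-2 * s)) ∧
      hnegNorm s (fun k => f k + g k) ≤ hnegNorm s f + hnegNorm s g := by
  simp_rw [norm_sq_mul_abs_rpow, hnegNorm_eq] at *
  obtain ⟨hbound, hle⟩ := summable_and_sqrt_tsum_add_sq_le (fun k => by positivity)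
    (fun k => by positivity) hf hg
  have hpoint (k : ℤ) : (‖f k + g k‖ * |(k : ℝ)| ^ (-s)) ^ 2 ≤
      (‖f k‖ * |(k : ℝ)| ^ (-s) + ‖g k‖ * |(k : ℝ)| ^ (-s)) ^ 2 := by
    rw [← add_mul]
    gcongr
    exact norm_add_le _ _
  have hsum := Summable.of_nonneg_of_le (fun _ => sq_nonneg _) hpoint hbound
  exact ⟨hsum, (sqrt_le_sqrt (hsum.tsum_le_tsum hpoint hbound)).trans hle⟩

theorem hnegNorm_sub_le_hnegNorm_add {f g : ℤ → ℂ}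
    (hf : Summable fun k : ℤ => ‖f k‖ ^ 2 * |(k : ℝ)| ^ (-2 * s))
    (hg : Summable fun k : ℤ => ‖g k‖ ^ 2 * |(k : ℝ)| ^ (-2 * s)) :
    hnegNorm s f - hnegNorm s g ≤ hnegNorm s (fun k => f k + g k) := by
  have hneg : Summable fun k : ℤ => ‖-g k‖ ^ 2 * |(k : ℝ)| ^ (-2 * s) := by simpa using hg
  have htri := (summable_and_hnegNorm_add_le (summable_and_hnegNorm_add_le hf hg).1 hneg).2
  simp only [add_neg_cancel_right] at htri
  rw [show hnegNorm s (fun k => -g k) = hnegNorm s g by simp [hnegNorm]] at htri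
  linarith

end Weights

section Ktilde

variable {s : ℝ} (ρ u : ℤ → ℂ)

/- The constraints `k₁ ≠ 0`, `k₂ ≠ 0` can be dropped: those terms vanish anyway, as division by
zero gives zero. -/
theorem Ktilde_apply_of_ne_zero {k : ℤ} (hk : k ≠ 0) :
    Ktilde ρ u k = -∑' j : ℤ, ρ (k - j) * u j / (3 * ((k - j : ℤ) : ℂ) * j) := by
  have hinj : Function.Injective fun j : ℤ => (k - j, j) := fun a b h => congrArg Prod.snd h
  rw [Ktilde, if_neg hk, ← hinj.tsum_eq]
  · congr 1
    refine tsum_congr fun j => ?_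
    split_ifs with h
    · rfl
    · rcases (by omega : k - j = 0 ∨ j = 0) with h0 | h0 <;> simp [h0]
  · intro p hp
    have hp : p.1 + p.2 = k := by by_contra h; simp [h] at hp
    exact ⟨p.2, Prod.ext (by simp only; omega) rfl⟩

theorem norm_Ktilde_summand_le (hs : s ≤ 1) (k j : ℤ) :
    ‖ρ (k - j) * u j / (3 * ((k - j : ℤ) : ℂ) * j)‖ ≤
      ‖ρ (k - j)‖ * (‖u j‖ * |(j : ℝ)| ^ (-s)) * (|((k - j : ℤ) : ℝ)|⁻¹ / 3) := by
  rw [norm_div, norm_mul, norm_mul, norm_mul, Complex.norm_intCast, Complex.norm_intCast]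
  calc ‖ρ (k - j)‖ * ‖u j‖ / (‖(3 : ℂ)‖ * |((k - j : ℤ) : ℝ)| * |(j : ℝ)|)
      = ‖ρ (k - j)‖ * (‖u j‖ * |(j : ℝ)|⁻¹) * (|((k - j : ℤ) : ℝ)|⁻¹ / 3) := by
        simp only [div_eq_mul_inv, mul_inv, Complex.norm_ofNat]; ring
    _ ≤ _ := by gcongr; exact abs_intCast_inv_le_rpow_neg hs j

theorem hasSum_abs_inv_sub_div_three_sq (k : ℤ) :
    HasSum (fun j : ℤ => (|((k - j : ℤ) : ℝ)|⁻¹ / 3) ^ 2) (π ^ 2 / 27) := by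
  have h : HasSum (fun m : ℤ => (|(m : ℝ)|⁻¹ / 3) ^ 2) (π ^ 2 / 27) := by
    have hterm : (fun m : ℤ => (|(m : ℝ)|⁻¹ / 3) ^ 2) = fun m : ℤ => ((m : ℝ) ^ 2)⁻¹ / 9 := by
      ext m
      rw [div_pow, inv_pow, sq_abs]
      norm_num
    rw [hterm, show π ^ 2 / 27 = π ^ 2 / 3 / 9 by ring]
    exact hasSum_inv_sq_int.div_const 9
  exact (Equiv.subLeft k).hasSum_iff.mpr h

theorem norm_Ktilde_le (hs : s ≤ 1) (k : ℤ)
    (hk : Summable fun j => (‖ρ (k - j)‖ * (‖u j‖ * |(j : ℝ)| ^ (-s))) ^ 2) :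
    ‖Ktilde ρ u k‖ ≤ 2 / 3 * √(∑' j, (‖ρ (k - j)‖ * (‖u j‖ * |(j : ℝ)| ^ (-s))) ^ 2) := by
  rcases eq_or_ne k 0 with rfl | hk0
  · simp only [Ktilde, if_pos, norm_zero]
    positivity
  obtain ⟨hsum, hcs⟩ := summable_and_tsum_mul_le_sqrt_mul_sqrt (fun j => by positivity)
    (fun j => by positivity) hk (hasSum_abs_inv_sub_div_three_sq k).summable
  have hπ : √(π ^ 2 / 27) ≤ 2 / 3 := by
    rw [sqrt_le_left (by norm_num)]
    nlinarith [pi_lt_d2, pi_pos]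
  rw [(hasSum_abs_inv_sub_div_three_sq k).tsum_eq] at hcs
  rw [Ktilde_apply_of_ne_zero ρ u hk0, norm_neg]
  calc _ ≤ _ := tsum_of_norm_bounded hsum.hasSum (norm_Ktilde_summand_le ρ u hs k)
    _ ≤ _ := hcs
    _ ≤ _ := by rw [mul_comm]; gcongr

end Ktilde

theorem summable_and_hnegNorm_Ktilde_le {s : ℝ} (hs0 : 0 ≤ s) (hs1 : s ≤ 1) {ρ u : ℤ → ℂ}
    (hρ : Summable fun k => ‖ρ k‖ ^ 2)
    (hu : Summable fun k : ℤ => ‖u k‖ ^ 2 * |(k : ℝ)| ^ (-2 * s)) :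
    (Summable fun k : ℤ => ‖Ktilde ρ u k‖ ^ 2 * |(k : ℝ)| ^ (-2 * s)) ∧
      hnegNorm s (Ktilde ρ u) ≤ 2 / 3 * l2norm ρ * hnegNorm s u := by
  simp_rw [norm_sq_mul_abs_rpow] at hu ⊢
  rw [hnegNorm_eq, hnegNorm_eq, l2norm]
  set v : ℤ → ℝ := fun j => ‖u j‖ * |(j : ℝ)| ^ (-s)
  obtain ⟨hfiber, hconv⟩ := summable_and_hasSum_tsum_sub_mul (fun j => sq_nonneg ‖ρ j‖)
    (fun j => sq_nonneg (v j)) hρ hu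
  have hpoint (k : ℤ) : (‖Ktilde ρ u k‖ * |(k : ℝ)| ^ (-s)) ^ 2 ≤
      4 / 9 * ∑' j, ‖ρ (k - j)‖ ^ 2 * v j ^ 2 := by
    simp_rw [← mul_pow] at hfiber ⊢
    have hK := norm_Ktilde_le ρ u hs1 k (hfiber k)
    have hw := abs_intCast_rpow_neg_le_one hs0 k
    calc (‖Ktilde ρ u k‖ * |(k : ℝ)| ^ (-s)) ^ 2
        ≤ (2 / 3 * √(∑' j, (‖ρ (k - j)‖ * v j) ^ 2)) ^ 2 :=
          pow_le_pow_left₀ (by positivity) ((mul_le_of_le_one_right (norm_nonneg _) hw).trans hK) 2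
      _ = 4 / 9 * ∑' j, (‖ρ (k - j)‖ * v j) ^ 2 := by
          rw [mul_pow, sq_sqrt (tsum_nonneg fun _ => sq_nonneg _)]
          norm_num
  have hsum := Summable.of_nonneg_of_le (fun _ => sq_nonneg _) hpoint (hconv.summable.mul_left _)
  refine ⟨hsum, ?_⟩
  calc √(∑' k, (‖Ktilde ρ u k‖ * |(k : ℝ)| ^ (-s)) ^ 2)
      ≤ √(4 / 9 * ((∑' k, ‖ρ k‖ ^ 2) * ∑' k, v k ^ 2)) := by
        rw [← hconv.tsum_eq, ← tsum_mul_left]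
        exact sqrt_le_sqrt (hsum.tsum_le_tsum hpoint (hconv.summable.mul_left _))
    _ = 2 / 3 * √(∑' k, ‖ρ k‖ ^ 2) * √(∑' k, v k ^ 2) := by
        rw [sqrt_mul (by norm_num), sqrt_mul (tsum_nonneg fun _ => sq_nonneg _),
          show (4 / 9 : ℝ) = (2 / 3) ^ 2 by norm_num, sqrt_sq (by norm_num), mul_assoc]

theorem Ktilde_operator_bound
    (s : ℝ) (hs0 : 0 < s) (hs1 : s ≤ 1)
    (ρ : ℤ → ℂ) (hρ : Summable fun k : ℤ => ‖ρ k‖ ^ 2) :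
    (∀ u : ℤ → ℂ, u 0 = 0 →
      Summable (fun k : ℤ => ‖u k‖ ^ 2 * |(k : ℝ)| ^ (-2 * s)) →
      hnegNorm s (Ktilde ρ u) ≤ 2 * l2norm ρ * hnegNorm s u) ∧
    (l2norm ρ < 1 / 2 →
      ∀ u : ℤ → ℂ, u 0 = 0 →
        Summable (fun k : ℤ => ‖u k‖ ^ 2 * |(k : ℝ)| ^ (-2 * s)) →
        hnegNorm s (fun k => u k + Ktilde ρ u k) ≥ (1 - 2 * l2norm ρ) * hnegNorm s u) := by
  have hnonneg (u : ℤ → ℂ) : 0 ≤ l2norm ρ * hnegNorm s u :=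
    mul_nonneg (sqrt_nonneg _) (sqrt_nonneg _)
  refine ⟨fun u _ hu => ?_, fun _ u _ hu => ?_⟩
  · linarith [(summable_and_hnegNorm_Ktilde_le hs0.le hs1 hρ hu).2, hnonneg u]
  · obtain ⟨hK, hKle⟩ := summable_and_hnegNorm_Ktilde_le hs0.le hs1 hρ hu
    linarith [hnegNorm_sub_le_hnegNorm_add hu hK, hKle, hnonneg u]
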